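/- Let X ⊆ ∏_{ξ<ω₁} K_ξ be closed (each K_ξ compact metrizable), and suppose every open subset of X is an Fσ (X is hereditarily Lindelöf). Then for every continuous f : S → Q from a subspace S ⊆ X to the Hilbert cube Q = [0,1]^ℕ, there is α < ω₁ such that f is constant on S ∩ π_α⁻¹{z} for every z ∈ π_α(X), where π_α is projection to the first α coordinates. -/

import Mathlib

open Set

/-- The first uncountable ordinal. -/
noncomputable def omega1 : Ordinal := (Cardinal.aleph 1).ord

/-- Projection onto the first `α` coordinates of a product indexed by `{ξ // ξ < β}`. -/
def projTo (K : Ordinal → Type*) {α β : Ordinal} (h : α ≤ β)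
    (x : ∀ ξ : {ξ : Ordinal // ξ < β}, K ξ) : ∀ ξ : {ξ : Ordinal // ξ < α}, K ξ :=
  fun ξ => x ⟨ξ.1, lt_of_lt_of_le ξ.2 h⟩

/-!
A closed set `C ⊆ X` whose complement is a countable union of closed sets `Fₙ` depends on only
countably many coordinates. Indeed `C` and each `Fₙ` are disjoint compact subsets of the product,
the closed sets `π_α⁻¹(π_α C)` decrease to `C` as `α → ω₁`, so by compactness one of them already
misses `Fₙ`; a countable supremum of countable ordinals is countable. Because `X` is hereditarily
Lindelöf, every open subset of `X` is a countable union of such closed sets, and the preimages under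
`f` of a countable basis of the Hilbert cube then all depend on the coordinates below one `α < ω₁`.
-/

open Ordinal

lemma omega1_eq_omega_one : omega1 = ω₁ := Cardinal.ord_aleph 1

lemma iSup_lt_omega1 {ι : Type*} [Countable ι] {α : ι → Ordinal} (h : ∀ i, α i < omega1) :
    ⨆ i, α i < omega1 := by
  rw [omega1_eq_omega_one] at *
  exact Ordinal.iSup_lt_omega_one h

lemma isSuccLimit_omega1 : Order.IsSuccLimit omega1 :=
  omega1_eq_omega_one ▸ Cardinal.isSuccLimit_omega 1

lemma exists_lt_omega1_forall {ι : Type*} [Countable ι] {P : ι → Ordinal → Prop}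
    (hP : ∀ i, Monotone (P i)) (h : ∀ i, ∃ α < omega1, P i α) :
    ∃ α < omega1, ∀ i, P i α := by
  choose α hα hPα using h
  exact ⟨⨆ i, α i, iSup_lt_omega1 hα, fun i => hP i (Ordinal.le_iSup α i) (hPα i)⟩

instance : Nonempty {α : Ordinal // α < omega1} := ⟨⟨0, isSuccLimit_omega1.bot_lt⟩⟩

abbrev Omega1Prod (K : Ordinal → Type*) := ∀ ξ : {ξ : Ordinal // ξ < omega1}, K ξ

section Restriction

variable {K : Ordinal → Type*}

def restrictBelow (α : Ordinal) :
    Omega1Prod K → ∀ ξ : {ξ : {ξ : Ordinal // ξ < omega1} | ξ.1 < α}, K ξ :=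
  Set.domRestrict _

lemma continuous_restrictBelow [∀ ξ, TopologicalSpace (K ξ)] (α : Ordinal) :
    Continuous (restrictBelow (K := K) α) :=
  Pi.continuous_domRestrict _

lemma restrictBelow_eq_of_le {α β : Ordinal} (hαβ : α ≤ β) {x y : Omega1Prod K}
    (h : restrictBelow β x = restrictBelow β y) : restrictBelow α x = restrictBelow α y :=
  funext fun ξ => congrFun h ⟨ξ.1, ξ.2.trans_le hαβ⟩

lemma eq_of_forall_restrictBelow_eq {x y : Omega1Prod K}
    (h : ∀ α < omega1, restrictBelow α x = restrictBelow α y) : x = y :=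
  funext fun ξ => congrFun (h _ (isSuccLimit_omega1.succ_lt ξ.2)) ⟨ξ, Order.lt_succ ξ.1⟩

lemma restrictBelow_eq_of_projTo_eq {α : Ordinal} (hα : α ≤ omega1) {x y : Omega1Prod K}
    (h : projTo K hα x = projTo K hα y) : restrictBelow α x = restrictBelow α y :=
  funext fun ξ => congrFun h ⟨ξ.1.1, ξ.2⟩

lemma antitone_preimage_image_restrictBelow (D : Set (Omega1Prod K)) :
    Antitone fun α => restrictBelow α ⁻¹' (restrictBelow α '' D) := by
  rintro α β hαβ x ⟨y, hy, hyx⟩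
  exact ⟨y, hy, restrictBelow_eq_of_le hαβ hyx⟩

end Restriction

section Compact

variable {K : Ordinal → Type*} [∀ ξ, TopologicalSpace (K ξ)] [∀ ξ, T2Space (K ξ)]

lemma IsCompact.isClosed_preimage_image_restrictBelow {D : Set (Omega1Prod K)}
    (hD : IsCompact D) (α : Ordinal) :
    IsClosed (restrictBelow α ⁻¹' (restrictBelow α '' D)) :=
  ((hD.image (continuous_restrictBelow α)).isClosed).preimage (continuous_restrictBelow α)

lemma IsCompact.mem_of_forall_restrictBelow_mem {D : Set (Omega1Prod K)} (hD : IsCompact D)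
    {x : Omega1Prod K} (hx : ∀ α < omega1, restrictBelow α x ∈ restrictBelow α '' D) :
    x ∈ D := by
  have hfiber (α : Ordinal) : IsClosed (restrictBelow α ⁻¹' {restrictBelow α x}) :=
    isClosed_singleton.preimage (continuous_restrictBelow α)
  let E (α : {α : Ordinal // α < omega1}) := D ∩ restrictBelow α ⁻¹' {restrictBelow α x}
  have hE_directed : Directed (· ⊇ ·) E := fun α β =>
    ⟨⟨max α β, max_lt α.2 β.2⟩,
      fun y hy => ⟨hy.1, restrictBelow_eq_of_le (le_max_left α.1 β.1) hy.2⟩,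
      fun y hy => ⟨hy.1, restrictBelow_eq_of_le (le_max_right α.1 β.1) hy.2⟩⟩
  obtain ⟨y, hy⟩ := IsCompact.nonempty_iInter_of_directed_nonempty_isCompact_isClosed E
    hE_directed (fun α => (hx α α.2).imp fun _ h => h) (fun α => hD.inter_right (hfiber α))
    (fun α => hD.isClosed.inter (hfiber α))
  rw [mem_iInter] at hy
  obtain rfl : y = x := eq_of_forall_restrictBelow_eq fun α hα => (hy ⟨α, hα⟩).2
  exact (hy ⟨0, isSuccLimit_omega1.bot_lt⟩).1

lemma IsCompact.exists_restrictBelow_ne_of_disjoint {D F : Set (Omega1Prod K)}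
    (hD : IsCompact D) (hF : IsCompact F) (hDF : Disjoint D F) :
    ∃ α < omega1, ∀ x ∈ D, ∀ y ∈ F, restrictBelow α x ≠ restrictBelow α y := by
  have hempty : F ∩ ⋂ α : {α : Ordinal // α < omega1},
      restrictBelow α ⁻¹' (restrictBelow α '' D) = ∅ := by
    refine eq_empty_of_forall_notMem fun y ⟨hyF, hy⟩ => hDF.notMem_of_mem_right hyF ?_
    exact hD.mem_of_forall_restrictBelow_mem fun α hα => mem_iInter.mp hy ⟨α, hα⟩
  obtain ⟨α, hα⟩ := hF.elim_directed_family_closed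
    (fun α : {α : Ordinal // α < omega1} => restrictBelow α ⁻¹' (restrictBelow α '' D))
    (fun α => hD.isClosed_preimage_image_restrictBelow α) hempty
    ((antitone_preimage_image_restrictBelow D).comp_monotone (Subtype.mono_coe _)).directed_ge
  exact ⟨α, α.2, fun x hx y hy hxy => hα.subset ⟨hy, x, hx, hxy⟩⟩

end Compact

section Subspace

variable {K : Ordinal → Type*} {X : Set (Omega1Prod K)}

def DeterminedBelow (α : Ordinal) (A : Set X) : Prop :=
  ∀ x y : X, restrictBelow α x.1 = restrictBelow α y.1 → x ∈ A → y ∈ A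

lemma monotone_determinedBelow (A : Set X) : Monotone fun α => DeterminedBelow α A :=
  fun _ _ hαβ hA x y hxy => hA x y (restrictBelow_eq_of_le hαβ hxy)

lemma DeterminedBelow.iUnion {ι : Type*} {α : Ordinal} {A : ι → Set X}
    (h : ∀ i, DeterminedBelow α (A i)) : DeterminedBelow α (⋃ i, A i) := by
  intro x y hxy hx
  obtain ⟨i, hi⟩ := mem_iUnion.mp hx
  exact mem_iUnion.mpr ⟨i, h i x y hxy hi⟩

variable [∀ ξ, TopologicalSpace (K ξ)] [∀ ξ, T2Space (K ξ)]

lemma IsClosed.exists_determinedBelow (hX : IsCompact X) {C : Set X} (hC : IsClosed C)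
    (hCc : ∃ F : ℕ → Set X, (∀ n, IsClosed (F n)) ∧ Cᶜ = ⋃ n, F n) :
    ∃ α < omega1, DeterminedBelow α C := by
  have : CompactSpace X := isCompact_iff_compactSpace.mp hX
  have hcompact {A : Set X} (hA : IsClosed A) : IsCompact (Subtype.val '' A) :=
    hA.isCompact.image continuous_subtype_val
  obtain ⟨F, hF, hCF⟩ := hCc
  have hdisj (n : ℕ) : Disjoint (Subtype.val '' C) (Subtype.val '' F n) :=
    (disjoint_image_iff Subtype.val_injective).mpr
      (subset_compl_iff_disjoint_left.mp (hCF ▸ subset_iUnion F n))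
  obtain ⟨α, hα, hsep⟩ := exists_lt_omega1_forall
    (P := fun n α => ∀ x ∈ Subtype.val '' C, ∀ y ∈ Subtype.val '' F n,
      restrictBelow α x ≠ restrictBelow α y)
    (fun _ _ _ hαβ h x hx y hy hxy => h x hx y hy (restrictBelow_eq_of_le hαβ hxy))
    fun n => (hcompact hC).exists_restrictBelow_ne_of_disjoint (hcompact (hF n)) (hdisj n)
  refine ⟨α, hα, fun x y hxy hx => of_not_not fun hy => ?_⟩
  obtain ⟨n, hn⟩ := mem_iUnion.mp (hCF ▸ hy : y ∈ ⋃ n, F n)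
  exact hsep n x ⟨x, hx, rfl⟩ y ⟨y, hn, rfl⟩ hxy

lemma IsOpen.exists_determinedBelow (hX : IsCompact X)
    (hHL : ∀ U : Set X, IsOpen U → ∃ F : ℕ → Set X, (∀ n, IsClosed (F n)) ∧ U = ⋃ n, F n)
    {V : Set X} (hV : IsOpen V) : ∃ α < omega1, DeterminedBelow α V := by
  obtain ⟨F, hF, rfl⟩ := hHL V hV
  obtain ⟨α, hα, hFα⟩ := exists_lt_omega1_forall (fun n => monotone_determinedBelow (F n))
    fun n => (hF n).exists_determinedBelow hX (hHL _ (hF n).isOpen_compl)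
  exact ⟨α, hα, DeterminedBelow.iUnion hFα⟩

theorem Continuous.exists_restrictBelow_eq_imp_eq (hX : IsCompact X)
    (hHL : ∀ U : Set X, IsOpen U → ∃ F : ℕ → Set X, (∀ n, IsClosed (F n)) ∧ U = ⋃ n, F n)
    {Y : Type*} [TopologicalSpace Y] [SecondCountableTopology Y] [T1Space Y]
    {S : Set X} {f : S → Y} (hf : Continuous f) :
    ∃ α < omega1, ∀ s s' : S, restrictBelow α s.1.1 = restrictBelow α s'.1.1 → f s = f s' := by
  let B := TopologicalSpace.countableBasis Y
  have hB := TopologicalSpace.isBasis_countableBasis Y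
  have : Countable B := (TopologicalSpace.countable_countableBasis Y).to_subtype
  have hbasic (b : B) : ∃ α < omega1, ∀ s s' : S,
      restrictBelow α s.1.1 = restrictBelow α s'.1.1 → f s ∈ b.1 → f s' ∈ b.1 := by
    obtain ⟨V, hV, hVb⟩ := isOpen_induced_iff.mp ((hB.isOpen b.2).preimage hf)
    obtain ⟨α, hα, hVα⟩ := hV.exists_determinedBelow hX hHL
    refine ⟨α, hα, fun s s' hss' hs => ?_⟩
    rw [← mem_preimage, ← hVb] at hs ⊢
    exact hVα s s' hss' hs
  obtain ⟨α, hα, hαB⟩ := exists_lt_omega1_forall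
    (fun _ _ _ hαβ h s s' hss' => h s s' (restrictBelow_eq_of_le hαβ hss')) hbasic
  refine ⟨α, hα, fun s s' hss' => (specializes_iff_forall_open.mpr fun U hU hsU => ?_).eq.symm⟩
  obtain ⟨b, hb, hsb, hbU⟩ := hB.exists_subset_of_mem_open hsU hU
  exact hbU (hαB ⟨b, hb⟩ s s' hss' hsb)

end Subspace

/-- If `X` is a hereditarily Lindelöf closed subspace of an `ω₁`-indexed product
of compact metrizable spaces (every open subset of `X` is an Fσ), then every
continuous map from a subspace `S ⊆ X` into the Hilbert cube is constant on the
traces on `S` of the fibers of some countable projection `π_α`. -/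
theorem stmt15 (K : Ordinal → Type) [∀ ξ, TopologicalSpace (K ξ)]
    [∀ ξ, CompactSpace (K ξ)] [∀ ξ, TopologicalSpace.MetrizableSpace (K ξ)]
    (X : Set (∀ ξ : {ξ : Ordinal // ξ < omega1}, K ξ)) (hX : IsClosed X)
    (hHL : ∀ U : Set X, IsOpen U →
      ∃ F : ℕ → Set X, (∀ n, IsClosed (F n)) ∧ U = ⋃ n, F n)
    (S : Set X) (f : S → (ℕ → Icc (0:ℝ) 1)) (hf : Continuous f) :
    ∃ α : Ordinal, α < omega1 ∧ ∀ h : α ≤ omega1, ∀ s s' : S,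
      projTo K h (s : X).1 = projTo K h (s' : X).1 → f s = f s' := by
  obtain ⟨α, hα, hfα⟩ := hf.exists_restrictBelow_eq_imp_eq hX.isCompact hHL
  exact ⟨α, hα, fun h s s' hss' => hfα s s' (restrictBelow_eq_of_projTo_eq h hss')⟩
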